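/- Define B_1 := {1} and B_n := {c_1(π), c_n(π) : π ∈ B_{n−1}} for n ≥ 2, i.e., B_n is the set of permutations obtained from the permutation 1 by repeatedly inserting the new largest value at the first or last position. Then |B_n| = 2^{n−1}, and for every zigzag language L_n ⊆ S_n with n ≥ 1 we have B_n ⊆ L_n; in particular, every zigzag language L_n with n ≥ 1 has at least 2^{n−1} elements. -/

import Mathlib

/-!
Shared definitions: permutations in one-line notation as lists of naturals,
deletion `p`, insertion `c_i`, zigzag languages, the Gray code sequence `J(L_n)`,
jumps, minimal jumps, the auxiliary sequences `s_n^π`, Algorithm M,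
vincular pattern containment and 2-clumped permutations.
-/

/-- `S_n`: permutations of `{1,…,n}` in one-line notation, as lists of naturals. -/
def SymmList (n : ℕ) : Set (List ℕ) := {l | List.Perm l (List.range' 1 n)}

/-- The identity permutation `id_n = 1 2 ⋯ n`. -/
def idPerm (n : ℕ) : List ℕ := List.range' 1 n

/-- `p(π)`: delete the largest entry `n = π.length` from the permutation `π ∈ S_n`. -/
def pdel (l : List ℕ) : List ℕ := l.erase l.length

/-- `c_i(π)`: insert the new largest value `π.length + 1` at (1-indexed) position `i`. -/
def cins (i : ℕ) (l : List ℕ) : List ℕ :=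
  l.take (i - 1) ++ (l.length + 1) :: l.drop (i - 1)

/-- Zigzag languages of permutations: `L_0 = {ε}` is a zigzag language, and
`L ⊆ S_{n+1}` is a zigzag language if `p(L)` is a zigzag language and
`c_1(π), c_{n+1}(π) ∈ L` for every `π ∈ p(L)`. -/
inductive IsZigzag : ℕ → Set (List ℕ) → Prop
  | zero : IsZigzag 0 {[]}
  | succ (n : ℕ) (L : Set (List ℕ)) :
      L ⊆ SymmList (n + 1) →
      IsZigzag n (pdel '' L) →
      (∀ l ∈ pdel '' L, cins 1 l ∈ L ∧ cins (n + 1) l ∈ L) →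
      IsZigzag (n + 1) L

/-- `→c(π)`: the sequence of those `c_1(π),…,c_n(π)` lying in `L`,
in increasing order of the insertion position. -/
noncomputable def cSeq (L : Set (List ℕ)) (n : ℕ) (l : List ℕ) : List (List ℕ) :=
  ((List.range' 1 n).map (fun i => cins i l)).filter
    (fun x => @decide (x ∈ L) (Classical.propDecidable _))

/-- The Gray code sequence `J(L_n)` of a language `L ⊆ S_n`:
`J(L_0) = ε`, and `J(L_{n+1})` is obtained from `J(L_n)` (for the language
`p(L)`) by replacing its entries alternately by `←c(π)` (the reverse of
`→c(π)`) and `→c(π)`. -/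
noncomputable def Jseq : ℕ → Set (List ℕ) → List (List ℕ)
  | 0, _ => [[]]
  | (n + 1), L =>
      (((Jseq n (pdel '' L)).mapIdx
        (fun k π => if k % 2 = 0 then (cSeq L (n + 1) π).reverse
                    else cSeq L (n + 1) π)).flatten)

/-- `ρ` is obtained from `π` by a right jump of the value `v` by `d` steps. -/
def RightJump (π ρ : List ℕ) (v d : ℕ) : Prop :=
  0 < d ∧ ∃ A B C : List ℕ, B.length = d ∧ (∀ x ∈ B, x < v) ∧
    π = A ++ v :: (B ++ C) ∧ ρ = A ++ (B ++ v :: C)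

/-- `ρ` is obtained from `π` by a left jump of the value `v` by `d` steps. -/
def LeftJump (π ρ : List ℕ) (v d : ℕ) : Prop := RightJump ρ π v d

/-- A right jump that is minimal with respect to `L`: every right jump of the
same value by fewer steps yields a permutation not in `L`. -/
def MinimalRightJump (L : Set (List ℕ)) (π ρ : List ℕ) (v d : ℕ) : Prop :=
  RightJump π ρ v d ∧ ∀ d' ρ', d' < d → RightJump π ρ' v d' → ρ' ∉ L

/-- A left jump that is minimal with respect to `L`. -/
def MinimalLeftJump (L : Set (List ℕ)) (π ρ : List ℕ) (v d : ℕ) : Prop :=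
  LeftJump π ρ v d ∧ ∀ d' ρ', d' < d → LeftJump π ρ' v d' → ρ' ∉ L

/-- The auxiliary sequence `s_n^π` of a permutation `π` occurring in `J(L_n)`,
as a function of the index `i ∈ {1,…,n}` (value `0` outside this range). -/
noncomputable def sVec : ℕ → Set (List ℕ) → List ℕ → ℕ → ℕ
  | 0, _, _, _ => 0
  | 1, _, _, i => if i = 1 then 1 else 0
  | (n + 2), L, π, i =>
      let L' := pdel '' L
      let π' := pdel π
      let cbar := if ((Jseq (n + 1) L').idxOf π') % 2 = 0
                  then (cSeq L (n + 2) π').reverse else cSeq L (n + 2) π'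
      if cbar.getLast? = some π then
        (if i ≤ n then sVec (n + 1) L' π' i
         else if i = n + 1 then n + 1
         else if i = n + 2 then sVec (n + 1) L' π' (n + 1) else 0)
      else
        (if i ≤ n + 1 then sVec (n + 1) L' π' i
         else if i = n + 2 then n + 2 else 0)

/-- `j` is at the first position of `l`, or the entry immediately left of `j`
in `l` is larger than `j`. -/
def AtLeftTurn (l : List ℕ) (j : ℕ) : Prop :=
  ∃ A B : List ℕ, l = A ++ j :: B ∧ (A = [] ∨ ∃ x, A.getLast? = some x ∧ j < x)

/-- `j` is at the last position of `l`, or the entry immediately right of `j`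
in `l` is larger than `j`. -/
def AtRightTurn (l : List ℕ) (j : ℕ) : Prop :=
  ∃ A B : List ℕ, l = A ++ j :: B ∧ (B = [] ∨ ∃ x, B.head? = some x ∧ j < x)

/-- `j` is not at the first position of `l`, and the entry immediately left of
`j` in `l` is smaller than `j`. -/
def SmallerLeftNeighbor (l : List ℕ) (j : ℕ) : Prop :=
  ∃ A B : List ℕ, ∃ x, l = A ++ j :: B ∧ A.getLast? = some x ∧ x < j

/-- `j` is not at the last position of `l`, and the entry immediately right of
`j` in `l` is smaller than `j`. -/
def SmallerRightNeighbor (l : List ℕ) (j : ℕ) : Prop :=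
  ∃ A B : List ℕ, ∃ x, l = A ++ j :: B ∧ B.head? = some x ∧ x < j

/-- A state of Algorithm M: the current permutation `π` and the auxiliary
arrays `o` and `s`; `o j = false` encodes direction `L` (left) and
`o j = true` encodes `R` (right). -/
structure MState where
  perm : List ℕ
  o : ℕ → Bool
  s : ℕ → ℕ

/-- The initial state of Algorithm M (step M1): `π = id_n`, `o_j = L`, `s_j = j`. -/
def MInit (n : ℕ) : MState := ⟨idPerm n, fun _ => false, fun j => j⟩

/-- One iteration (steps M3–M5) of Algorithm M on a language `L ⊆ S_n`:
with `j := s_n ≠ 1`, the permutation jumps minimally in the direction `o_j`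
(step M4), and the arrays `o`, `s` are updated as in step M5. -/
def MStep (L : Set (List ℕ)) (n : ℕ) (σ σ' : MState) : Prop :=
  σ.s n ≠ 1 ∧
  σ'.perm ∈ L ∧
  ((σ.o (σ.s n) = false ∧ ∃ d, MinimalLeftJump L σ.perm σ'.perm (σ.s n) d) ∨
   (σ.o (σ.s n) = true ∧ ∃ d, MinimalRightJump L σ.perm σ'.perm (σ.s n) d)) ∧
  (((σ.o (σ.s n) = false ∧ AtLeftTurn σ'.perm (σ.s n)) ∨
    (σ.o (σ.s n) = true ∧ AtRightTurn σ'.perm (σ.s n))) →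
      σ'.o = Function.update σ.o (σ.s n) (!σ.o (σ.s n)) ∧
      σ'.s = Function.update (Function.update (Function.update σ.s n n) (σ.s n)
               ((Function.update σ.s n n) (σ.s n - 1))) (σ.s n - 1) (σ.s n - 1)) ∧
  (¬ ((σ.o (σ.s n) = false ∧ AtLeftTurn σ'.perm (σ.s n)) ∨
      (σ.o (σ.s n) = true ∧ AtRightTurn σ'.perm (σ.s n))) →
      σ'.o = σ.o ∧ σ'.s = Function.update σ.s n n)

/-- `π` contains the vincular pattern `pat` whose marked adjacent pair starts
at (0-indexed) position `k` of `pat`. -/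
def ContainsVincular (π pat : List ℕ) (k : ℕ) : Prop :=
  ∃ f : ℕ → ℕ, StrictMonoOn f (Set.Iio pat.length) ∧
    (∀ i < pat.length, f i < π.length) ∧
    f (k + 1) = f k + 1 ∧
    (∀ i < pat.length, ∀ j < pat.length,
      (pat.getD i 0 < pat.getD j 0 ↔ π.getD (f i) 0 < π.getD (f j) 0))

/-- 2-clumped permutations: those avoiding the vincular patterns
`3(51)24`, `3(51)42`, `24(51)3` and `42(51)3`. -/
def TwoClumped (π : List ℕ) : Prop :=
  ¬ ContainsVincular π [3, 5, 1, 2, 4] 1 ∧ ¬ ContainsVincular π [3, 5, 1, 4, 2] 1 ∧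
  ¬ ContainsVincular π [2, 4, 5, 1, 3] 2 ∧ ¬ ContainsVincular π [4, 2, 5, 1, 3] 2

/-- `S'_n`: the set of 2-clumped permutations in `S_n`. -/
def SClump (n : ℕ) : Set (List ℕ) := {l ∈ SymmList n | TwoClumped l}

/-- `B_n`: the permutations obtained from `1` by repeatedly inserting the new
largest value at the first or the last position. -/
def Bset : ℕ → Set (List ℕ)
  | 0 => {[]}
  | 1 => {[1]}
  | (n + 2) => {l | ∃ π ∈ Bset (n + 1), l = cins 1 π ∨ l = cins (n + 2) π}

/-!
Unfolding the recursion, `B_{n+1} = c_1(B_n) ∪ c_{n+1}(B_n)`, and this union is disjoint for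
`n ≥ 1` (the images are told apart by their first entry) with both maps injective, so the
size doubles at each step. The inclusion `B_n ⊆ L_n` follows by induction along the zigzag
structure, since `L_n` contains `c_1(π)` and `c_n(π)` for every `π ∈ p(L_n) ⊇ B_{n-1}`.
-/

lemma cins_one (l : List ℕ) : cins 1 l = (l.length + 1) :: l := by
  simp [cins]

lemma cins_length_succ (l : List ℕ) : cins (l.length + 1) l = l ++ [l.length + 1] := by
  simp [cins]

lemma cins_injOn (i n : ℕ) : Set.InjOn (cins i) {l | l.length = n} := by
  intro l hl l' hl' h
  have hsplit := List.append_inj h (by simp [hl.out, hl'.out])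
  rw [← List.take_append_drop (i - 1) l, ← List.take_append_drop (i - 1) l', hsplit.1,
    (List.cons.inj hsplit.2).2]

namespace SymmList

lemma length_eq {n : ℕ} {l : List ℕ} (hl : l ∈ SymmList n) : l.length = n := by
  simpa using List.Perm.length_eq hl

lemma lt_of_mem {n : ℕ} {l : List ℕ} (hl : l ∈ SymmList n) {x : ℕ} (hx : x ∈ l) :
    x < n + 1 := by
  have := List.mem_range'.1 (hl.mem_iff.1 hx)
  omega

lemma finite (n : ℕ) : (SymmList n).Finite :=
  (List.range' 1 n).permutations.finite_toSet.subset fun _ hl => List.mem_permutations.2 hl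

lemma cins_mem {n : ℕ} {l : List ℕ} (hl : l ∈ SymmList n) (i : ℕ) :
    cins i l ∈ SymmList (n + 1) := by
  have hrange : List.range' 1 (n + 1) = List.range' 1 n ++ [n + 1] := by
    rw [List.range'_concat]; ring_nf
  rw [cins, length_eq hl]
  change List.Perm _ _
  rw [hrange]
  refine List.perm_middle.trans ?_
  rw [List.take_append_drop]
  exact (hl.cons _).trans (List.perm_append_singleton _ _).symm

lemma cins_one_ne_cins_succ {n : ℕ} {l l' : List ℕ} (hl : l ∈ SymmList n)
    (hl' : l' ∈ SymmList n) (hn : n ≠ 0) : cins 1 l ≠ cins (n + 1) l' := by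
  rw [cins_one, length_eq hl, ← length_eq hl', cins_length_succ, length_eq hl']
  obtain ⟨a, t, rfl⟩ : ∃ a t, l' = a :: t :=
    List.exists_cons_of_ne_nil fun h => hn (by simpa [h] using (length_eq hl').symm)
  have ha : a < n + 1 := lt_of_mem hl' List.mem_cons_self
  simp only [List.cons_append, ne_eq, List.cons.injEq, not_and]
  omega

end SymmList

lemma Bset_succ (n : ℕ) : Bset (n + 1) = cins 1 '' Bset n ∪ cins (n + 1) '' Bset n := by
  rcases n with _ | n
  · simp [Bset, cins]
  · ext l
    simp only [Bset, Set.mem_ofPred_eq, Set.mem_union, Set.mem_image]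
    grind

lemma Bset_subset_symmList (n : ℕ) : Bset n ⊆ SymmList n := by
  induction n with
  | zero => simp [Bset, SymmList]
  | succ n ih =>
    rw [Bset_succ, Set.union_subset_iff]
    exact ⟨Set.image_subset_iff.2 fun l hl => SymmList.cins_mem (ih hl) 1,
      Set.image_subset_iff.2 fun l hl => SymmList.cins_mem (ih hl) (n + 1)⟩

lemma ncard_Bset_succ (n : ℕ) : (Bset (n + 1)).ncard = 2 ^ n := by
  induction n with
  | zero => simp [Bset]
  | succ n ih =>
    have hB := Bset_subset_symmList (n + 1)
    have hfin := (SymmList.finite (n + 1)).subset hB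
    have hdisj : Disjoint (cins 1 '' Bset (n + 1)) (cins (n + 2) '' Bset (n + 1)) := by
      rw [Set.disjoint_left]
      rintro _ ⟨l, hl, rfl⟩ ⟨l', hl', h⟩
      exact SymmList.cins_one_ne_cins_succ (hB hl) (hB hl') n.succ_ne_zero h.symm
    have hinj (i : ℕ) : Set.InjOn (cins i) (Bset (n + 1)) :=
      (cins_injOn i (n + 1)).mono fun _ hl => SymmList.length_eq (hB hl)
    rw [Bset_succ, Set.ncard_union_eq hdisj (hfin.image _) (hfin.image _),
      (hinj 1).ncard_image, (hinj _).ncard_image, ih]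
    ring

lemma ncard_Bset (n : ℕ) : (Bset n).ncard = 2 ^ (n - 1) := by
  rcases n with _ | n
  · simp [Bset]
  · exact ncard_Bset_succ n

namespace IsZigzag

lemma subset_symmList {n : ℕ} {L : Set (List ℕ)} (hL : IsZigzag n L) : L ⊆ SymmList n := by
  cases hL with
  | zero => simp [SymmList]
  | succ _ _ hsub => exact hsub

lemma finite {n : ℕ} {L : Set (List ℕ)} (hL : IsZigzag n L) : L.Finite :=
  (SymmList.finite n).subset hL.subset_symmList

lemma Bset_subset {n : ℕ} {L : Set (List ℕ)} (hL : IsZigzag n L) : Bset n ⊆ L := by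
  induction hL with
  | zero => simp [Bset]
  | succ n L _ _ hclosed ih =>
    rw [Bset_succ, Set.union_subset_iff]
    exact ⟨Set.image_subset_iff.2 fun l hl => (hclosed l (ih hl)).1,
      Set.image_subset_iff.2 fun l hl => (hclosed l (ih hl)).2⟩

end IsZigzag

theorem Bset_card_and_subset_general (n : ℕ) :
    (Bset n).ncard = 2 ^ (n - 1) ∧
    ∀ L : Set (List ℕ), IsZigzag n L → Bset n ⊆ L ∧ 2 ^ (n - 1) ≤ L.ncard := by
  refine ⟨ncard_Bset n, fun L hL => ⟨hL.Bset_subset, ?_⟩⟩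
  calc 2 ^ (n - 1) = (Bset n).ncard := (ncard_Bset n).symm
    _ ≤ L.ncard := Set.ncard_le_ncard hL.Bset_subset hL.finite

/-- `B_n`, the set of permutations obtained from `1` by
repeatedly inserting the new largest value at the first or last position,
satisfies `|B_n| = 2^{n−1}`, and `B_n ⊆ L_n` for every zigzag language
`L_n ⊆ S_n` with `n ≥ 1`; in particular every such zigzag language has at
least `2^{n−1}` elements. -/
theorem Bset_card_and_subset (n : ℕ) (hn : 1 ≤ n) :
    (Bset n).ncard = 2 ^ (n - 1) ∧
    ∀ L : Set (List ℕ), IsZigzag n L → Bset n ⊆ L ∧ 2 ^ (n - 1) ≤ L.ncard :=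
  Bset_card_and_subset_general n
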